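/- arXiv:1901.05787 — 3 statements merged into one kernel-verified Lean document; each statement's English description precedes it below -/
import Mathlib

section
/- Let ω ∈ {0,1}^E be a configuration on the box Λ satisfying {T ⇸ B}. Define O(T) = { x ∈ Λ : x is connected to T by an open path of ω }, and let C^+ be the set of edges f of Λ such that (1) f has exactly one endpoint in O(T), and (2) there exists a path of L^d connecting B to f which uses no vertex of O(T). Then every edge of C^+ is closed in ω, and C^+ contains a cut (a minimal set of edges separating T from B). -/
open scoped BigOperators
open scoped Classical

noncomputable section

namespace IsingInterface

/-- Embedding of lattice points of `ℤ^d` into Euclidean space. -/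
def toE (d : ℕ) (x : Fin d → ℤ) : EuclideanSpace ℝ (Fin d) := WithLp.toLp 2 (fun i => (x i : ℝ))

/-- Two lattice points are adjacent in `𝕃^d` when they are at Euclidean distance `1`. -/
def latticeAdj (d : ℕ) (x y : Fin d → ℤ) : Prop := dist (toE d x) (toE d y) = 1

/-- `e` is an edge of the lattice `𝕃^d`. -/
def IsLatticeEdge (d : ℕ) (e : Sym2 (Fin d → ℤ)) : Prop :=
  ∃ x y, e = s(x, y) ∧ latticeAdj d x y

/-- The centre of the unit segment associated to an edge. -/
def edgeMid (d : ℕ) (e : Sym2 (Fin d → ℤ)) : EuclideanSpace ℝ (Fin d) :=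
  Sym2.lift ⟨fun x y => midpoint ℝ (toE d x) (toE d y), fun _ _ => midpoint_comm _ _⟩ e

/-- Two edges are `*`-neighbours when the centres of their unit segments are at
`ℓ^∞` distance at most `1` (and they are distinct). -/
def starAdj (d : ℕ) (e f : Sym2 (Fin d → ℤ)) : Prop :=
  e ≠ f ∧ ∀ i, |edgeMid d e i - edgeMid d f i| ≤ 1

/-- A reference edge of the lattice. -/
def refEdge (d : ℕ) : Sym2 (Fin d → ℤ) :=
  s(fun _ => 0, fun j => if (j : ℕ) = 0 then 1 else 0)

/-- `α(d)`: the number of `*`-neighbours of an edge of `𝕃^d`. -/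
def alphaStar (d : ℕ) : ℕ :=
  Nat.card {f : Sym2 (Fin d → ℤ) // IsLatticeEdge d f ∧ starAdj d (refEdge d) f}

/-- The closed unit segment associated to an edge, as a subset of Euclidean space. -/
def edgeRegion (d : ℕ) (e : Sym2 (Fin d → ℤ)) : Set (EuclideanSpace ℝ (Fin d)) :=
  {pt | ∃ x y, e = s(x, y) ∧ pt ∈ segment ℝ (toE d x) (toE d y)}

/-- The Euclidean distance between the sets `A` and `B` is at least `r`. -/
def distGE (d : ℕ) (A B : Set (EuclideanSpace ℝ (Fin d))) (r : ℝ) : Prop :=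
  ∀ pt ∈ A, ∀ qt ∈ B, r ≤ dist pt qt

/-- The `r`-neighbourhood `𝒱(A, r)` of a set `A`. -/
def nbhd (d : ℕ) (A : Set (EuclideanSpace ℝ (Fin d))) (r : ℝ) :
    Set (EuclideanSpace ℝ (Fin d)) := {pt | ∃ a ∈ A, dist pt a ≤ r}

/-- The `i`-th coordinate unit vector of `ℤ^d`. -/
def unitZ (d : ℕ) (i : Fin d) : Fin d → ℤ := fun j => if j = i then 1 else 0

/-- A box `Λ`: the finite subgraph of `𝕃^d` whose vertices lie in a `d`-dimensional cube
centred at the origin, not necessarily parallel to the directions of the lattice.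
It is described by a rotation of `ℝ^d` (a linear isometry), the half side-length of the
cube, and the direction (`axis`) of the hyperplane through the origin which is parallel to
a face of the cube and splits the box into the two halves determining the sides `T` and
`B`.  The (always satisfied) field `finite'` records that the box is finite. -/
structure Box (d : ℕ) where
  rot : EuclideanSpace ℝ (Fin d) ≃ₗᵢ[ℝ] EuclideanSpace ℝ (Fin d)
  halfside : ℝ
  halfside_pos : 0 < halfside
  axis : Fin d
  finite' : Set.Finite {x : Fin d → ℤ | ∀ i, |rot.symm (toE d x) i| ≤ halfside}

namespace Box

variable {d : ℕ} (Λ : Box d)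

/-- The region of `ℝ^d` occupied by the cube defining the box. -/
def region : Set (EuclideanSpace ℝ (Fin d)) :=
  {p | ∀ i, |Λ.rot.symm p i| ≤ Λ.halfside}

/-- The set of vertices of the box. -/
def Vset : Set (Fin d → ℤ) := {x | toE d x ∈ Λ.region}

lemma finite_Vset : Λ.Vset.Finite := Λ.finite'

/-- The vertices of the box, as a finset. -/
def Vfinset : Finset (Fin d → ℤ) := Λ.finite_Vset.toFinset

/-- `|Λ|`: the number of vertices of the box. -/
def size : ℝ := (Λ.Vfinset.card : ℝ)

/-- The boundary `∂Λ` of the box: vertices having a lattice neighbour outside the box. -/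
def bdry : Set (Fin d → ℤ) :=
  {x | x ∈ Λ.Vset ∧ ∃ y, latticeAdj d x y ∧ y ∉ Λ.Vset}

/-- The side `T` of `∂Λ`: boundary vertices lying strictly in the upper half box. -/
def Tside : Set (Fin d → ℤ) :=
  {x | x ∈ Λ.bdry ∧ 0 < Λ.rot.symm (toE d x) Λ.axis}

/-- The side `B` of `∂Λ`: boundary vertices lying strictly in the lower half box. -/
def Bside : Set (Fin d → ℤ) :=
  {x | x ∈ Λ.bdry ∧ Λ.rot.symm (toE d x) Λ.axis < 0}

/-- The set of edges of the box. -/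
def Eset : Set (Sym2 (Fin d → ℤ)) :=
  {e | ∃ x y, e = s(x, y) ∧ latticeAdj d x y ∧ x ∈ Λ.Vset ∧ y ∈ Λ.Vset}

lemma finite_Eset : Λ.Eset.Finite := by
  apply Set.Finite.subset ((Λ.finite_Vset.prod Λ.finite_Vset).image (fun p => s(p.1, p.2)))
  rintro e ⟨x, y, rfl, _, hx, hy⟩
  exact ⟨(x, y), ⟨hx, hy⟩, rfl⟩

/-- The edges of the box, as a finset. -/
def Efinset : Finset (Sym2 (Fin d → ℤ)) := Λ.finite_Eset.toFinset

/-- The type of edges of the box. -/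
abbrev Edge : Type := {e : Sym2 (Fin d → ℤ) // e ∈ Λ.Efinset}

/-- A percolation configuration on the box. -/
abbrev Config : Type := Λ.Edge → Bool

/-- `x` and `y` are joined by an open edge. -/
def openAdj (ω : Λ.Config) (x y : Fin d → ℤ) : Prop :=
  ∃ h : s(x, y) ∈ Λ.Efinset, ω ⟨s(x, y), h⟩ = true

/-- `x` and `y` are joined by an open path. -/
def Conn (ω : Λ.Config) : (Fin d → ℤ) → (Fin d → ℤ) → Prop :=
  Relation.ReflTransGen (Λ.openAdj ω)

/-- `x` is joined to the set `S` by an open path. -/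
def connTo (ω : Λ.Config) (S : Set (Fin d → ℤ)) (x : Fin d → ℤ) : Prop :=
  ∃ v ∈ S, Λ.Conn ω v x

/-- The event `{T ↔ B}`: an open path joins `T` to `B`. -/
def TconnB (ω : Λ.Config) : Prop :=
  ∃ x ∈ Λ.Tside, ∃ y ∈ Λ.Bside, Λ.Conn ω x y

/-- The open cluster of the vertex `x`. -/
def clusterSet (ω : Λ.Config) (x : Fin d → ℤ) : Set (Fin d → ℤ) := {y | Λ.Conn ω x y}

/-- Adjacency for the graph augmented by two ghost vertices implementing the `TB`
boundary condition: a ghost vertex wired to all of `T` and one wired to all of `B`. -/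
def augAdj (ω : Λ.Config) : ((Fin d → ℤ) ⊕ Bool) → ((Fin d → ℤ) ⊕ Bool) → Prop
  | Sum.inl x, Sum.inl y => Λ.openAdj ω x y
  | Sum.inl x, Sum.inr g => (g = true ∧ x ∈ Λ.Tside) ∨ (g = false ∧ x ∈ Λ.Bside)
  | Sum.inr g, Sum.inl x => (g = true ∧ x ∈ Λ.Tside) ∨ (g = false ∧ x ∈ Λ.Bside)
  | Sum.inr _, Sum.inr _ => False

/-- The cluster of a vertex in the augmented graph. -/
def augCluster (ω : Λ.Config) (v : (Fin d → ℤ) ⊕ Bool) : Set ((Fin d → ℤ) ⊕ Bool) :=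
  {w | Relation.EqvGen (Λ.augAdj ω) v w}

/-- `k(ω, Λ)`: the number of open clusters meeting `Λ`, with `TB` boundary condition. -/
def kCount (ω : Λ.Config) : ℕ :=
  Nat.card {S : Set ((Fin d → ℤ) ⊕ Bool) // ∃ x ∈ Λ.Vset, S = Λ.augCluster ω (Sum.inl x)}

/-- The FK (random-cluster) weight of a configuration. -/
def fkWeight (p q : ℝ) (ω : Λ.Config) : ℝ :=
  (∏ e : Λ.Edge, if ω e then p else 1 - p) * q ^ Λ.kCount ω

/-- The FK partition function. -/
def fkZ (p q : ℝ) : ℝ := ∑ ω : Λ.Config, Λ.fkWeight p q ω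

/-- The FK measure `Φ^{TB}_{Λ,p,q}` of an event `A`. -/
def fkProb (p q : ℝ) (A : Set Λ.Config) : ℝ :=
  (∑ ω : Λ.Config, Set.indicator A (Λ.fkWeight p q) ω) / Λ.fkZ p q

/-- The configuration `ω` with the state of the edge `e` set to `b`. -/
def upd (ω : Λ.Config) (e : Λ.Edge) (b : Bool) : Λ.Config := Function.update ω e b

/-- `e` is pivotal: `T` and `B` are disconnected but opening `e` connects them. -/
def pivotal (ω : Λ.Config) (e : Λ.Edge) : Prop :=
  ¬ Λ.TconnB ω ∧ Λ.TconnB (Λ.upd ω e true)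

/-- The set `𝒫` of pivotal edges of a configuration. -/
def pivSet (ω : Λ.Config) : Set Λ.Edge := {e | Λ.pivotal ω e}

/-- `x` and `y` are joined by an edge of the box avoiding the edge set `S`. -/
def avoidAdj (S : Set Λ.Edge) (x y : Fin d → ℤ) : Prop :=
  ∃ h : s(x, y) ∈ Λ.Efinset, (⟨s(x, y), h⟩ : Λ.Edge) ∉ S

/-- The edge set `S` separates `T` and `B` in the box. -/
def separates (S : Set Λ.Edge) : Prop :=
  ¬ ∃ x ∈ Λ.Tside, ∃ y ∈ Λ.Bside, Relation.ReflTransGen (Λ.avoidAdj S) x y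

/-- A cut: an edge set separating `T` and `B`, minimal for inclusion. -/
def isCut (S : Set Λ.Edge) : Prop :=
  Λ.separates S ∧ ∀ S' ⊂ S, ¬ Λ.separates S'

/-- A cut of the configuration `ω`: a cut all of whose edges are closed in `ω`. -/
def isConfigCut (ω : Λ.Config) (S : Set Λ.Edge) : Prop :=
  (∀ e ∈ S, ω e = false) ∧ Λ.isCut S

/-- The edge set `S` separates the vertex set `A` from the vertex set `S'` in the box. -/
def separatesFrom (S : Set Λ.Edge) (A T' : Set (Fin d → ℤ)) : Prop :=
  ¬ ∃ a ∈ A, ∃ t ∈ T', Relation.ReflTransGen (Λ.avoidAdj S) a t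

/-- The region of `ℝ^d` occupied by a set of edges of the box. -/
def edgeSetRegion (S : Set Λ.Edge) : Set (EuclideanSpace ℝ (Fin d)) :=
  ⋃ e ∈ S, edgeRegion d (e : Λ.Edge).1

/-- The event that the semi-distance `d_H^ℓ(A, B)` is at least `m`. -/
def dHge (ℓ : ℝ) (A B : Set (EuclideanSpace ℝ (Fin d))) (m : ℝ) : Prop :=
  ∀ r : ℝ, 0 ≤ r →
    (A \ nbhd d Λ.regionᶜ ℓ ⊆ nbhd d B r ∧ B \ nbhd d Λ.regionᶜ ℓ ⊆ nbhd d A r) → m ≤ r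

/-- The probability `Φ(ω_e) / (Φ(ω^e) + Φ(ω_e))` that the Gibbs sampler closes `e`. -/
def closeThreshold (p q : ℝ) (ω : Λ.Config) (e : Λ.Edge) : ℝ :=
  Λ.fkWeight p q (Λ.upd ω e false) /
    (Λ.fkWeight p q (Λ.upd ω e true) + Λ.fkWeight p q (Λ.upd ω e false))

/-- Transition kernel of the constrained Gibbs sampler `(Y_t)`, which refuses to open an
edge when this would connect `T` to `B`. -/
def kerY (p q : ℝ) (ω ω' : Λ.Config) : ℝ :=
  ((Λ.Efinset.card : ℝ))⁻¹ * ∑ e : Λ.Edge,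
    (if Λ.TconnB (Λ.upd ω e true) then (if ω' = Λ.upd ω e false then 1 else 0)
     else (if ω' = Λ.upd ω e true then 1 - Λ.closeThreshold p q ω e else 0) +
          (if ω' = Λ.upd ω e false then Λ.closeThreshold p q ω e else 0))

/-- `s`-step transition probabilities of the constrained Gibbs sampler. -/
def kerYpow (p q : ℝ) : ℕ → Λ.Config → Λ.Config → ℝ
  | 0, ω, ω' => if ω = ω' then 1 else 0
  | n + 1, ω, ω' => ∑ z : Λ.Config, Λ.kerY p q ω z * kerYpow p q n z ω'

/-- Transition kernel of the coupled Gibbs sampler `(X_t, Y_t)`: both chains use the same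
uniform edge `E_t` and the same uniform variable `U_t`; `X` is unconstrained while `Y`
refuses openings that would connect `T` to `B`. -/
def kerXY (p q : ℝ) (st st' : Λ.Config × Λ.Config) : ℝ :=
  ((Λ.Efinset.card : ℝ))⁻¹ * ∑ e : Λ.Edge,
    (let a := Λ.closeThreshold p q st.1 e
     let b := Λ.closeThreshold p q st.2 e
     let yo : Λ.Config :=
       if Λ.TconnB (Λ.upd st.2 e true) then Λ.upd st.2 e false else Λ.upd st.2 e true
     (if st' = (Λ.upd st.1 e true, yo) then 1 - max a b else 0) +
     (if st' = (Λ.upd st.1 e true, Λ.upd st.2 e false) then max 0 (b - a) else 0) +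
     (if st' = (Λ.upd st.1 e false, yo) then max 0 (a - b) else 0) +
     (if st' = (Λ.upd st.1 e false, Λ.upd st.2 e false) then min a b else 0))

/-- The state space `𝓔` of the coupled process: `Y` disconnects `T` from `B` and
`X` dominates `Y`. -/
def goodState (st : Λ.Config × Λ.Config) : Prop :=
  (¬ Λ.TconnB st.2) ∧ ∀ e, st.2 e = true → st.1 e = true

/-- `μ` is the (unique) equilibrium distribution `μ_{Λ,p,q}` of the coupled Gibbs
sampler: a probability measure carried by `𝓔` and stationary for the coupled kernel. -/
def IsCoupling (p q : ℝ) (μ : Λ.Config × Λ.Config → ℝ) : Prop :=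
  (∀ st, 0 ≤ μ st) ∧ (∑ st : Λ.Config × Λ.Config, μ st = 1) ∧
  (∀ st, μ st ≠ 0 → Λ.goodState st) ∧
  (∀ st', ∑ st : Λ.Config × Λ.Config, μ st * Λ.kerXY p q st st' = μ st')

/-- Probability of a one-time event under a distribution `μ` on pairs. -/
def prob (μ : Λ.Config × Λ.Config → ℝ) (A : Set (Λ.Config × Λ.Config)) : ℝ :=
  ∑ st : Λ.Config × Λ.Config, Set.indicator A μ st

/-- Probability of a trajectory of the stationary coupled chain `(X_t, Y_t)_{0 ≤ t ≤ N}`. -/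
def pathProb (p q : ℝ) (μ : Λ.Config × Λ.Config → ℝ) (N : ℕ)
    (γ : Fin (N + 1) → Λ.Config × Λ.Config) : ℝ :=
  μ (γ 0) * ∏ i : Fin N, Λ.kerXY p q (γ i.castSucc) (γ i.succ)

/-- The law `P_μ` of the stationary coupled chain, on trajectories of length `N`. -/
def pathMeasure (p q : ℝ) (μ : Λ.Config × Λ.Config → ℝ) (N : ℕ)
    (A : Set (Fin (N + 1) → Λ.Config × Λ.Config)) : ℝ :=
  ∑ γ : Fin (N + 1) → Λ.Config × Λ.Config, Set.indicator A (Λ.pathProb p q μ N) γ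

/-- The FK measure conditioned on `{T ⇸ B}`, i.e. `Φ^𝒟 = Φ^{TB}(· | T ⇸ B)`. -/
def fkCondD (p q : ℝ) (ω : Λ.Config) : ℝ :=
  (if Λ.TconnB ω then 0 else Λ.fkWeight p q ω) /
    ∑ ω' : Λ.Config, (if Λ.TconnB ω' then 0 else Λ.fkWeight p q ω')

/-- A spin configuration on the vertices of the box (`true` codes `+1`). -/
abbrev SpinCfg : Type := {x : Fin d → ℤ // x ∈ Λ.Vfinset} → Bool

end Box

/-- The spin value of a Boolean spin. -/
def spinVal (b : Bool) : ℝ := if b then 1 else -1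

namespace Box

variable {d : ℕ} (Λ : Box d)

/-- `x` and `y` are adjacent vertices of the box both carrying the spin `b`. -/
def signAdj (σ : Λ.SpinCfg) (b : Bool) (x y : Fin d → ℤ) : Prop :=
  latticeAdj d x y ∧ ∃ hx : x ∈ Λ.Vfinset, ∃ hy : y ∈ Λ.Vfinset,
    σ ⟨x, hx⟩ = b ∧ σ ⟨y, hy⟩ = b

/-- `x` is joined to the set `S` by a path of vertices carrying the spin `b`. -/
def signConnTo (σ : Λ.SpinCfg) (b : Bool) (x : Fin d → ℤ) (S : Set (Fin d → ℤ)) : Prop :=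
  ∃ t ∈ S, Relation.ReflTransGen (Λ.signAdj σ b) x t

/-- The set `𝒫_I`: edges `⟨x,y⟩` with `σ^D(x) = +1`, `x` joined to `T` by a `+` path,
`σ^D(y) = -1` and `y` joined to `B` by a `-` path. -/
def PIset (σD : Λ.SpinCfg) : Set Λ.Edge :=
  {e | ∃ x y, ∃ hx : x ∈ Λ.Vfinset, ∃ hy : y ∈ Λ.Vfinset, (e : Λ.Edge).1 = s(x, y) ∧
    σD ⟨x, hx⟩ = true ∧ Λ.signConnTo σD true x Λ.Tside ∧
    σD ⟨y, hy⟩ = false ∧ Λ.signConnTo σD false y Λ.Bside}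

/-- The interface `ℐ_I`: edges whose endpoints agree in `σ^+` and in `σ^-` but
disagree in `σ^D`. -/
def IIset (σP σM σD : Λ.SpinCfg) : Set Λ.Edge :=
  {e | ∃ x y, ∃ hx : x ∈ Λ.Vfinset, ∃ hy : y ∈ Λ.Vfinset, (e : Λ.Edge).1 = s(x, y) ∧
    σP ⟨x, hx⟩ = σP ⟨y, hy⟩ ∧ σM ⟨x, hx⟩ = σM ⟨y, hy⟩ ∧ σD ⟨x, hx⟩ ≠ σD ⟨y, hy⟩}

/-- A cut in the spin configuration `σ^D`: a set of edges `⟨x,y⟩` separating `T` and `B`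
with `σ^D(x) ≠ σ^D(y)`. -/
def spinCut (σD : Λ.SpinCfg) (S : Set Λ.Edge) : Prop :=
  Λ.separates S ∧ ∀ e ∈ S, ∃ x y, ∃ hx : x ∈ Λ.Vfinset, ∃ hy : y ∈ Λ.Vfinset,
    (e : Λ.Edge).1 = s(x, y) ∧ σD ⟨x, hx⟩ ≠ σD ⟨y, hy⟩

/-- Validity of the Dobrushin colouring `σ^D` of the clusters of `ω'`. -/
def validD (ω' : Λ.Config) (σD : Λ.SpinCfg) : Prop :=
  (∀ x y (hx : x ∈ Λ.Vfinset) (hy : y ∈ Λ.Vfinset),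
      Λ.Conn ω' x y → σD ⟨x, hx⟩ = σD ⟨y, hy⟩) ∧
  (∀ x (hx : x ∈ Λ.Vfinset), Λ.connTo ω' Λ.Tside x → σD ⟨x, hx⟩ = true) ∧
  (∀ x (hx : x ∈ Λ.Vfinset), Λ.connTo ω' Λ.Bside x → σD ⟨x, hx⟩ = false)

/-- The number of clusters of `ω'` joined neither to `T` nor to `B`, each of which
receives an independent uniform spin in `σ^D`. -/
def freeDCount (ω' : Λ.Config) : ℕ :=
  Nat.card {S : Set (Fin d → ℤ) //
    ∃ x ∈ Λ.Vset, ¬ Λ.connTo ω' (Λ.Tside ∪ Λ.Bside) x ∧ S = Λ.clusterSet ω' x}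

/-- Validity of the colourings `σ^+`, `σ^-` of the clusters of `ω`, given `σ^D`. -/
def validPM (ω ω' : Λ.Config) (σD σP σM : Λ.SpinCfg) : Prop :=
  (∀ x y (hx : x ∈ Λ.Vfinset) (hy : y ∈ Λ.Vfinset), Λ.Conn ω x y →
      σP ⟨x, hx⟩ = σP ⟨y, hy⟩ ∧ σM ⟨x, hx⟩ = σM ⟨y, hy⟩) ∧
  (∀ x (hx : x ∈ Λ.Vfinset), Λ.connTo ω Λ.bdry x →
      σP ⟨x, hx⟩ = true ∧ σM ⟨x, hx⟩ = false) ∧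
  (∀ x (hx : x ∈ Λ.Vfinset), ¬ Λ.connTo ω Λ.bdry x → σP ⟨x, hx⟩ = σM ⟨x, hx⟩) ∧
  (∀ x (hx : x ∈ Λ.Vfinset), ¬ Λ.connTo ω Λ.bdry x →
      Λ.clusterSet ω x = Λ.clusterSet ω' x → σP ⟨x, hx⟩ = σD ⟨x, hx⟩)

/-- The number of clusters of `ω` not touching `∂Λ` which are unions of several clusters
of `ω'`, each of which receives an independent uniform spin `N(C)` in `σ^±`. -/
def freePMCount (ω ω' : Λ.Config) : ℕ :=
  Nat.card {S : Set (Fin d → ℤ) //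
    ∃ x ∈ Λ.Vset, ¬ Λ.connTo ω Λ.bdry x ∧ Λ.clusterSet ω x ≠ Λ.clusterSet ω' x ∧
      S = Λ.clusterSet ω x}

/-- The conditional probability of obtaining the spins `(σ^+, σ^-, σ^D)` from the
coupled configurations `(ω, ω')` in the Edwards–Sokal colouring. -/
def colorProb (ω ω' : Λ.Config) (tr : Λ.SpinCfg × Λ.SpinCfg × Λ.SpinCfg) : ℝ :=
  (if Λ.validD ω' tr.2.2 ∧ Λ.validPM ω ω' tr.2.2 tr.1 tr.2.1 then 1 else 0) *
    (1 / 2) ^ (Λ.freeDCount ω' + Λ.freePMCount ω ω')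

/-- The law `π_{Λ,β}` of the triple `(σ^+, σ^-, σ^D)` built from `(ω, ω') ∼ μ`. -/
def isingCoupling (μ : Λ.Config × Λ.Config → ℝ)
    (tr : Λ.SpinCfg × Λ.SpinCfg × Λ.SpinCfg) : ℝ :=
  ∑ st : Λ.Config × Λ.Config, μ st * Λ.colorProb st.1 st.2 tr

/-- Probability of an event under `π_{Λ,β}`. -/
def piProb (μ : Λ.Config × Λ.Config → ℝ)
    (A : Set (Λ.SpinCfg × Λ.SpinCfg × Λ.SpinCfg)) : ℝ :=
  ∑ tr : Λ.SpinCfg × Λ.SpinCfg × Λ.SpinCfg, Set.indicator A (Λ.isingCoupling μ) tr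

/-- The field acting on `x ∈ Λ` created by the exterior spins `ξ`. -/
def extField (ξ : (Fin d → ℤ) → ℝ) (x : Fin d → ℤ) : ℝ :=
  ∑ i : Fin d,
    ((if (x + unitZ d i) ∈ Λ.Vset then 0 else ξ (x + unitZ d i)) +
     (if (x - unitZ d i) ∈ Λ.Vset then 0 else ξ (x - unitZ d i)))

/-- The interaction energy `Σ_{⟨x,y⟩ ∈ E} σ(x)σ(y)` of a spin configuration. -/
def pairEnergy (σ : Λ.SpinCfg) : ℝ :=
  (1 / 2) * ∑ x : {v : Fin d → ℤ // v ∈ Λ.Vfinset}, ∑ y : {v : Fin d → ℤ // v ∈ Λ.Vfinset},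
    if latticeAdj d x.1 y.1 then spinVal (σ x) * spinVal (σ y) else 0

/-- The Boltzmann weight of a spin configuration with exterior spins `ξ`. -/
def isingWeight (β : ℝ) (ξ : (Fin d → ℤ) → ℝ) (σ : Λ.SpinCfg) : ℝ :=
  Real.exp (β * (Λ.pairEnergy σ +
    ∑ x : {v : Fin d → ℤ // v ∈ Λ.Vfinset}, Λ.extField ξ x.1 * spinVal (σ x)))

/-- The Ising Gibbs measure at inverse temperature `β` with exterior spins `ξ`. -/
def isingProbFun (β : ℝ) (ξ : (Fin d → ℤ) → ℝ) (σ : Λ.SpinCfg) : ℝ :=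
  Λ.isingWeight β ξ σ / ∑ σ' : Λ.SpinCfg, Λ.isingWeight β ξ σ'

/-- The exterior spins realising the Dobrushin boundary condition: `+1` in the upper
half space, `-1` in the lower one. -/
def dobrushinExt (z : Fin d → ℤ) : ℝ :=
  if 0 ≤ Λ.rot.symm (toE d z) Λ.axis then 1 else -1

/-- The open cluster `O(T)` of the side `T`. -/
def OT (ω : Λ.Config) : Set (Fin d → ℤ) :=
  {x | x ∈ Λ.Vset ∧ Λ.connTo ω Λ.Tside x}

/-- The set `C^+`: edges with exactly one endpoint in `O(T)` which are reachable from `B`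
by a lattice path avoiding `O(T)`. -/
def Cplus (ω : Λ.Config) : Set Λ.Edge :=
  {e | (∃ x y, (e : Λ.Edge).1 = s(x, y) ∧ x ∈ Λ.OT ω ∧ y ∉ Λ.OT ω) ∧
    ∃ b ∈ Λ.Bside, ∃ v, v ∈ (e : Λ.Edge).1 ∧ v ∉ Λ.OT ω ∧
      Relation.ReflTransGen
        (fun u w => latticeAdj d u w ∧ u ∉ Λ.OT ω ∧ w ∉ Λ.OT ω) b v}

/-- The outer edge boundary `∂_e C` of a set of vertices `C`: closed edges with exactly
one endpoint in `C`. -/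
def outerEdgeBdry (ω : Λ.Config) (C : Set (Fin d → ℤ)) : Set Λ.Edge :=
  {e | ω e = false ∧ ∃ x y, (e : Λ.Edge).1 = s(x, y) ∧ x ∈ C ∧ y ∉ C}

/-- The event `Γ(e, n, side)`: there is a closed `*`-path of length `n` starting from `e`
and a cut separating this path from `side`. -/
def GammaEvent (e : Λ.Edge) (n : ℕ) (side : Set (Fin d → ℤ)) : Set Λ.Config :=
  {ω | ∃ γ : Fin n → Λ.Edge,
    (∃ i : Fin n, (i : ℕ) = 0 ∧ γ i = e) ∧
    (∀ i j : Fin n, (j : ℕ) = (i : ℕ) + 1 → starAdj d (γ i).1 (γ j).1) ∧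
    (∀ i, ω (γ i) = false) ∧
    ∃ S : Set Λ.Edge, Λ.isCut S ∧
      Λ.separatesFrom S {v | ∃ i, v ∈ (γ i).1} side}

end Box

end IsingInterface

/-!
An open edge leaving `O(T)` would enlarge `O(T)`, so every edge of `C⁺` is closed.
A path from `B` that avoids `C⁺` never enters `O(T)`: the first edge entering `O(T)` has
exactly one endpoint in `O(T)` and is reached from `B` outside `O(T)`, so it lies in `C⁺`.
As `T ⊆ O(T)`, the set `C⁺` separates `T` from `B`, and by finiteness it contains a minimal
separating set.
-/

namespace IsingInterface

lemma latticeAdj_symm {d : ℕ} {x y : Fin d → ℤ} (h : latticeAdj d x y) : latticeAdj d y x := by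
  rwa [latticeAdj, dist_comm]

namespace Box

variable {d : ℕ} (Λ : Box d)

lemma latticeAdj_of_mk_mem_Efinset {x y : Fin d → ℤ} (h : s(x, y) ∈ Λ.Efinset) :
    latticeAdj d x y ∧ x ∈ Λ.Vset ∧ y ∈ Λ.Vset := by
  rw [Efinset, Set.Finite.mem_toFinset] at h
  obtain ⟨a, b, hab, hl, ha, hb⟩ := h
  rcases Sym2.eq_iff.mp hab with ⟨rfl, rfl⟩ | ⟨rfl, rfl⟩
  · exact ⟨hl, ha, hb⟩
  · exact ⟨latticeAdj_symm hl, hb, ha⟩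

instance (S : Set Λ.Edge) : Std.Symm (Λ.avoidAdj S) where
  symm := by
    rintro x y ⟨h, hS⟩
    rw [avoidAdj, Sym2.eq_swap]
    exact ⟨h, hS⟩

lemma exists_isCut_subset {S : Set Λ.Edge} (hS : Λ.separates S) : ∃ S' ⊆ S, Λ.isCut S' := by
  obtain ⟨S', hS'S, hmin⟩ :=
    (Set.toFinite {S : Set Λ.Edge | Λ.separates S}).exists_le_minimal (a := S) hS
  exact ⟨S', hS'S, hmin.prop, fun S'' hlt hsep => hlt.not_ge (hmin.le_of_le hsep hlt.le)⟩

variable {Λ} {ω : Λ.Config}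

lemma Tside_subset_OT : Λ.Tside ⊆ Λ.OT ω :=
  fun t ht => ⟨ht.1.1, t, ht, Relation.ReflTransGen.refl⟩

lemma disjoint_Bside_OT (hω : ¬ Λ.TconnB ω) : Disjoint Λ.Bside (Λ.OT ω) :=
  Set.disjoint_left.mpr fun b hb ⟨_, t, ht, hc⟩ => hω ⟨t, ht, b, hb, hc⟩

lemma mem_OT_of_openAdj {x y : Fin d → ℤ} (hx : x ∈ Λ.OT ω) (hxy : Λ.openAdj ω x y) :
    y ∈ Λ.OT ω := by
  obtain ⟨t, ht, hc⟩ := hx.2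
  exact ⟨(Λ.latticeAdj_of_mk_mem_Efinset hxy.1).2.2, t, ht, hc.tail hxy⟩

lemma closed_of_mem_Cplus {e : Λ.Edge} (he : e ∈ Λ.Cplus ω) : ω e = false := by
  obtain ⟨⟨x, y, hexy, hx, hy⟩, -⟩ := he
  obtain ⟨e, he⟩ := e
  subst hexy
  by_contra hopen
  exact hy (mem_OT_of_openAdj hx ⟨he, Bool.not_eq_false _ ▸ hopen⟩)

lemma avoidsOT_of_reflTransGen_avoidAdj_Cplus (hω : ¬ Λ.TconnB ω) {b z : Fin d → ℤ}
    (hb : b ∈ Λ.Bside) (hz : Relation.ReflTransGen (Λ.avoidAdj (Λ.Cplus ω)) b z) :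
    z ∉ Λ.OT ω ∧
      Relation.ReflTransGen (fun u w => latticeAdj d u w ∧ u ∉ Λ.OT ω ∧ w ∉ Λ.OT ω) b z := by
  induction hz with
  | refl => exact ⟨Set.disjoint_left.mp (disjoint_Bside_OT hω) hb, .refl⟩
  | @tail u z _ huz ih =>
    obtain ⟨hu, hbu⟩ := ih
    obtain ⟨hmem, hnot⟩ := huz
    by_cases hz : z ∈ Λ.OT ω
    · exact (hnot ⟨⟨z, u, Sym2.eq_swap, hz, hu⟩, b, hb, u, Sym2.mem_mk_left u z, hu, hbu⟩).elim
    · exact ⟨hz, hbu.tail ⟨(Λ.latticeAdj_of_mk_mem_Efinset hmem).1, hu, hz⟩⟩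

lemma separates_Cplus (hω : ¬ Λ.TconnB ω) : Λ.separates (Λ.Cplus ω) := by
  rintro ⟨t, ht, b, hb, htb⟩
  have hbt := Std.Symm.symm _ _ htb
  exact (avoidsOT_of_reflTransGen_avoidAdj_Cplus hω hb hbt).1 (Tside_subset_OT ht)

end Box

theorem Cplus_closed_and_contains_cut_general
    (d : ℕ) (Λ : Box d) (ω : Λ.Config) (hω : ¬ Λ.TconnB ω) :
    (∀ e : Λ.Edge, e ∈ Λ.Cplus ω → ω e = false) ∧
    ∃ S : Set Λ.Edge, S ⊆ Λ.Cplus ω ∧ Λ.isCut S :=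
  ⟨fun _ => Box.closed_of_mem_Cplus, Λ.exists_isCut_subset (Box.separates_Cplus hω)⟩

/-- **Lemma (the set `C⁺`).**
Let `ω` be a configuration on the box `Λ` satisfying `{T ⇸ B}`.  Every edge of the set
`C⁺` (edges with exactly one endpoint in the open cluster `O(T)` of `T`, reachable from
`B` by a lattice path avoiding `O(T)`) is closed in `ω`, and `C⁺` contains a cut. -/
theorem Cplus_closed_and_contains_cut
    (d : ℕ) (hd : 2 ≤ d) (Λ : Box d) (ω : Λ.Config) (hω : ¬ Λ.TconnB ω) :
    (∀ e : Λ.Edge, e ∈ Λ.Cplus ω → ω e = false) ∧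
    ∃ S : Set Λ.Edge, S ⊆ Λ.Cplus ω ∧ Λ.isCut S :=
  Cplus_closed_and_contains_cut_general d Λ ω hω

end IsingInterface
end
end

section
/- Let ω ∈ {0,1}^E be a configuration on the box Λ satisfying {T ⇸ B}, and let C be an open cluster of ω not touching ∂Λ whose outer edge boundary ∂_e C contains no pivotal edge for {T ⇸ B}, and suppose every cut intersects ∂_e C. Then there exists a subset A ⊆ ∂_e C with |A| ≥ |∂_e C|/2 and a cut disjoint from A. -/
open scoped BigOperators
open scoped Classical

noncomputable section

/-!
Take a cut `S` of closed edges. If at least half of `∂ₑC` lies outside `S`, take `A = ∂ₑC \ S`.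
Otherwise flip `S` across `C`, replacing `S ∩ ∂ₑC` by `∂ₑC \ S`. The flipped set still
separates `T` from `B`: a path avoiding it would have to enter `C` from the `T`-side and
leave it towards the `B`-side, each time through an edge of `S ∩ ∂ₑC`, and every edge of a
cut joins the part of the box reachable from `T` to the part reachable from `B`; so `C` would
meet both parts, which are disjoint, while `C` is open-connected. A cut inside the flipped set
is disjoint from `A = ∂ₑC ∩ S`.
-/

open scoped symmDiff

namespace IsingInterface

namespace Box

variable {d : ℕ}

def reach (Λ : Box d) (S : Set Λ.Edge) (X : Set (Fin d → ℤ)) : Set (Fin d → ℤ) :=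
  {z | ∃ x ∈ X, Relation.ReflTransGen (Λ.avoidAdj S) x z}

variable {Λ : Box d} {ω : Λ.Config} {S : Set Λ.Edge} {C X Y : Set (Fin d → ℤ)}

instance inst_s13 (S : Set Λ.Edge) : Std.Symm (Λ.avoidAdj S) where
  symm x y := by
    intro h
    unfold Box.avoidAdj at h ⊢
    rw [Sym2.eq_swap]
    exact h

instance (ω : Λ.Config) : Std.Symm (Λ.openAdj ω) where
  symm x y := by
    intro h
    unfold Box.openAdj at h ⊢
    rw [Sym2.eq_swap]
    exact h

lemma subset_reach : X ⊆ Λ.reach S X := fun x hx => ⟨x, hx, .refl⟩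

lemma mem_reach_of_avoidAdj {z w : Fin d → ℤ} (hz : z ∈ Λ.reach S X)
    (h : Λ.avoidAdj S z w) : w ∈ Λ.reach S X :=
  let ⟨x, hx, hxz⟩ := hz
  ⟨x, hx, hxz.tail h⟩

lemma mem_reach_of_conn (hS : ∀ e ∈ S, ω e = false) {z w : Fin d → ℤ}
    (hz : z ∈ Λ.reach S X) (h : Λ.Conn ω z w) : w ∈ Λ.reach S X := by
  induction h with
  | refl => exact hz
  | tail _ hopen ih =>
    obtain ⟨he, hopen⟩ := hopen
    exact mem_reach_of_avoidAdj ih ⟨he, fun hmem => by simp [hS _ hmem] at hopen⟩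

lemma separates_iff_disjoint_reach :
    Λ.separates S ↔ Disjoint (Λ.reach S Λ.Tside) (Λ.reach S Λ.Bside) := by
  refine ⟨fun hsep => Set.disjoint_left.mpr ?_,
    fun hdisj ⟨t, ht, b, hb, htb⟩ => hdisj.ne_of_mem ⟨t, ht, htb⟩ (subset_reach hb) rfl⟩
  rintro z ⟨t, ht, htz⟩ ⟨b, hb, hbz⟩
  exact hsep ⟨t, ht, b, hb, htz.trans (symm hbz)⟩

lemma separates_setOf_eq_false (hω : ¬ Λ.TconnB ω) :
    Λ.separates {e | ω e = false} := by
  rintro ⟨t, ht, b, hb, htb⟩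
  refine hω ⟨t, ht, b, hb, Relation.ReflTransGen.mono ?_ _ _ htb⟩
  exact fun x y ⟨he, hclosed⟩ => ⟨he, by simpa using hclosed⟩

lemma exists_isConfigCut_subset (hS : ∀ e ∈ S, ω e = false) (hsep : Λ.separates S) :
    ∃ S' ⊆ S, Λ.isConfigCut ω S' := by
  obtain ⟨S', hS'S, hmin⟩ := exists_minimal_le_of_wellFoundedLT _ S hsep
  exact ⟨S', hS'S, fun e he => hS e (hS'S he), hmin.1,
    fun S'' hS'' hsep'' => hS''.not_ge (hmin.2 hsep'' hS''.le)⟩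

lemma reflTransGen_avoidAdj_sdiff_singleton (e : Λ.Edge) {a b : Fin d → ℤ}
    (h : Relation.ReflTransGen (Λ.avoidAdj (S \ {e})) a b) :
    Relation.ReflTransGen (Λ.avoidAdj S) a b ∨
      ∃ u w, e.1 = s(u, w) ∧ Relation.ReflTransGen (Λ.avoidAdj S) a u ∧
        Relation.ReflTransGen (Λ.avoidAdj S) w b := by
  induction h with
  | refl => exact .inl .refl
  | @tail m c _ hmc ih =>
    obtain ⟨hmem, hns⟩ := hmc
    by_cases hS : (⟨s(m, c), hmem⟩ : Λ.Edge) ∈ S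
    · have he : e.1 = s(m, c) := by
        by_contra hne
        exact hns ⟨hS, fun h => hne (by rw [← h])⟩
      rcases ih with ham | ⟨u, w, heq, hau, hwm⟩
      · exact .inr ⟨m, c, he, ham, .refl⟩
      · rcases Sym2.eq_iff.mp (heq.symm.trans he) with ⟨rfl, rfl⟩ | ⟨rfl, rfl⟩
        · exact .inr ⟨u, w, heq, hau, .refl⟩
        · exact .inl hau
    · rcases ih with ham | ⟨u, w, heq, hau, hwm⟩
      · exact .inl (ham.tail ⟨hmem, hS⟩)
      · exact .inr ⟨u, w, heq, hau, hwm.tail ⟨hmem, hS⟩⟩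

/-- By minimality, removing `e` from the cut reconnects `T` to `B`, necessarily through `e`. -/
lemma exists_endpoints_mem_reach_of_isCut (hcut : Λ.isCut S) {e : Λ.Edge} (he : e ∈ S) :
    ∃ u w, e.1 = s(u, w) ∧ u ∈ Λ.reach S Λ.Tside ∧ w ∈ Λ.reach S Λ.Bside := by
  have hsep := hcut.2 _ (Set.sdiff_singleton_ssubset.mpr he)
  rw [Box.separates, not_not] at hsep
  obtain ⟨t, ht, b, hb, htb⟩ := hsep
  rcases reflTransGen_avoidAdj_sdiff_singleton e htb with htb | ⟨u, w, heq, htu, hwb⟩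
  · exact absurd ⟨t, ht, b, hb, htb⟩ hcut.1
  · exact ⟨u, w, heq, ⟨t, ht, htu⟩, ⟨b, hb, symm hwb⟩⟩

lemma mem_reach_Bside_of_isCut (hcut : Λ.isCut S) {e : Λ.Edge} (he : e ∈ S)
    {u w : Fin d → ℤ} (huw : e.1 = s(u, w)) (hu : u ∈ Λ.reach S Λ.Tside) :
    w ∈ Λ.reach S Λ.Bside := by
  obtain ⟨u', w', heq, hu', hw'⟩ := exists_endpoints_mem_reach_of_isCut hcut he
  rcases Sym2.eq_iff.mp (huw.symm.trans heq) with ⟨-, rfl⟩ | ⟨rfl, -⟩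
  · exact hw'
  · exact absurd hw' ((separates_iff_disjoint_reach.mp hcut.1).notMem_of_mem_left hu)

lemma mem_reach_Tside_of_isCut (hcut : Λ.isCut S) {e : Λ.Edge} (he : e ∈ S)
    {u w : Fin d → ℤ} (huw : e.1 = s(u, w)) (hu : u ∈ Λ.reach S Λ.Bside) :
    w ∈ Λ.reach S Λ.Tside := by
  obtain ⟨u', w', heq, hu', hw'⟩ := exists_endpoints_mem_reach_of_isCut hcut he
  rcases Sym2.eq_iff.mp (huw.symm.trans heq) with ⟨rfl, -⟩ | ⟨-, rfl⟩
  · exact absurd hu ((separates_iff_disjoint_reach.mp hcut.1).notMem_of_mem_left hu')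
  · exact hu'

/-- Outside `C` the sets `S` and `S ∆ ∂ₑC` agree, and an edge entering `C` from outside is
closed, so it avoids `S ∆ ∂ₑC` only if it lies in `S`. -/
lemma mem_reach_or_inter_reach_nonempty
    (hC : ∀ x y, Λ.openAdj ω x y → x ∈ C → y ∈ C) (hXC : Disjoint X C)
    (hS : ∀ e ∈ S, ∀ {u w}, e.1 = s(u, w) → u ∈ Λ.reach S X → w ∈ Λ.reach S Y)
    {z : Fin d → ℤ} (hz : z ∈ Λ.reach (S ∆ Λ.outerEdgeBdry ω C) X) :
    (z ∉ C ∧ z ∈ Λ.reach S X) ∨ (C ∩ Λ.reach S Y).Nonempty := by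
  obtain ⟨x, hx, hxz⟩ := hz
  induction hxz with
  | refl => exact .inl ⟨hXC.notMem_of_mem_left hx, subset_reach hx⟩
  | @tail m b _ hmb ih =>
    rcases ih with ⟨hmC, hm⟩ | hCY
    · obtain ⟨hmem, hflip⟩ := hmb
      by_cases hbC : b ∈ C
      · have hclosed : ω ⟨s(m, b), hmem⟩ = false := by
          by_contra hopen
          exact hmC (hC b m (symm (⟨hmem, by simpa using hopen⟩ : Λ.openAdj ω m b)) hbC)
        have hSmb : (⟨s(m, b), hmem⟩ : Λ.Edge) ∈ S := by
          by_contra hnS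
          exact hflip (Set.mem_symmDiff.mpr
            (.inr ⟨⟨hclosed, b, m, Sym2.eq_swap, hbC, hmC⟩, hnS⟩))
        exact .inr ⟨b, hbC, hS _ hSmb rfl hm⟩
      · have hnS : (⟨s(m, b), hmem⟩ : Λ.Edge) ∉ S := by
          refine fun hSmb => hflip (Set.mem_symmDiff.mpr (.inl ⟨hSmb, ?_⟩))
          rintro ⟨-, x', y', heq, hx'C, -⟩
          rcases Sym2.eq_iff.mp heq with ⟨rfl, -⟩ | ⟨-, rfl⟩
          · exact hmC hx'C
          · exact hbC hx'C
        exact .inl ⟨hbC, mem_reach_of_avoidAdj hm ⟨hmem, hnS⟩⟩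
    · exact .inr hCY

theorem separates_symmDiff_outerEdgeBdry (hS : Λ.isConfigCut ω S) {x : Fin d → ℤ}
    (hT : Disjoint Λ.Tside (Λ.clusterSet ω x)) (hB : Disjoint Λ.Bside (Λ.clusterSet ω x)) :
    Λ.separates (S ∆ Λ.outerEdgeBdry ω (Λ.clusterSet ω x)) := by
  obtain ⟨hclosed, hcut⟩ := hS
  have hTB := separates_iff_disjoint_reach.mp hcut.1
  have hC : ∀ y z, Λ.openAdj ω y z → y ∈ Λ.clusterSet ω x → z ∈ Λ.clusterSet ω x :=
    fun _ _ hyz hy => hy.tail hyz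
  rintro ⟨t, ht, b, hb, htb⟩
  have hbt := symm htb
  obtain ⟨hbC, hbT⟩ | ⟨c₁, hc₁, hc₁B⟩ := mem_reach_or_inter_reach_nonempty hC hT
    (fun e he => mem_reach_Bside_of_isCut hcut he) ⟨t, ht, htb⟩
  · exact hTB.ne_of_mem hbT (subset_reach hb) rfl
  obtain ⟨htC, htB⟩ | ⟨c₂, hc₂, hc₂T⟩ := mem_reach_or_inter_reach_nonempty hC hB
    (fun e he => mem_reach_Tside_of_isCut hcut he) ⟨b, hb, hbt⟩
  · exact hTB.ne_of_mem (subset_reach ht) htB rfl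
  have hc₂c₁ : Λ.Conn ω c₂ c₁ :=
    (symm (hc₂ : Relation.ReflTransGen (Λ.openAdj ω) x c₂)).trans hc₁
  exact hTB.ne_of_mem (mem_reach_of_conn hclosed hc₂T hc₂c₁) hc₁B rfl

end Box

theorem half_outer_boundary_avoids_cut_general
    (d : ℕ) (Λ : Box d) (ω : Λ.Config) (hω : ¬ Λ.TconnB ω)
    (x0 : Fin d → ℤ)
    (hint : ∀ v ∈ Λ.clusterSet ω x0, v ∉ Λ.bdry) :
    ∃ A : Set Λ.Edge, A ⊆ Λ.outerEdgeBdry ω (Λ.clusterSet ω x0) ∧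
      (Λ.outerEdgeBdry ω (Λ.clusterSet ω x0)).ncard ≤ 2 * A.ncard ∧
      ∃ S : Set Λ.Edge, Λ.isConfigCut ω S ∧ Disjoint S A := by
  set Bd := Λ.outerEdgeBdry ω (Λ.clusterSet ω x0)
  obtain ⟨S, -, hS⟩ :=
    Box.exists_isConfigCut_subset (fun _ h => h) (Box.separates_setOf_eq_false hω)
  have hsplit : (Bd ∩ S).ncard + (Bd \ S).ncard = Bd.ncard :=
    Set.ncard_inter_add_ncard_sdiff_eq_ncard Bd S (Set.toFinite _)
  by_cases hle : (Bd ∩ S).ncard ≤ (Bd \ S).ncard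
  · exact ⟨Bd \ S, Set.sdiff_subset, by omega, S, hS, Set.disjoint_sdiff_right⟩
  have hflip_closed : ∀ e ∈ S ∆ Bd, ω e = false := by
    rintro e (⟨he, -⟩ | ⟨he, -⟩)
    exacts [hS.1 e he, he.1]
  obtain ⟨S', hS'flip, hS'⟩ := Box.exists_isConfigCut_subset hflip_closed
    (Box.separates_symmDiff_outerEdgeBdry hS
      (Set.disjoint_left.mpr fun v hv hvC => hint v hvC hv.1)
      (Set.disjoint_left.mpr fun v hv hvC => hint v hvC hv.1))
  refine ⟨Bd ∩ S, Set.inter_subset_left, by omega, S', hS', ?_⟩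
  exact ((disjoint_symmDiff_inf S Bd).mono_left hS'flip).mono_right (Set.inter_comm Bd S).le

/-- **Lemma (half of the outer boundary of a cluster avoids a cut).**
Let `ω ∈ {T ⇸ B}` and let `C` be an open cluster of `ω` not touching `∂Λ` whose outer
edge boundary `∂_e C` contains no pivotal edge, and suppose that every cut of the
configuration intersects `∂_e C`.  Then there is a subset `A ⊆ ∂_e C` with
`|A| ≥ |∂_e C| / 2` and a cut disjoint from `A`. -/
theorem half_outer_boundary_avoids_cut
    (d : ℕ) (hd : 2 ≤ d) (Λ : Box d) (ω : Λ.Config) (hω : ¬ Λ.TconnB ω)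
    (x0 : Fin d → ℤ) (hx0 : x0 ∈ Λ.Vset)
    (hint : ∀ v ∈ Λ.clusterSet ω x0, v ∉ Λ.bdry)
    (hnopiv : ∀ e ∈ Λ.outerEdgeBdry ω (Λ.clusterSet ω x0), ¬ Λ.pivotal ω e)
    (hmeet : ∀ S : Set Λ.Edge, Λ.isConfigCut ω S →
      ∃ e, e ∈ S ∧ e ∈ Λ.outerEdgeBdry ω (Λ.clusterSet ω x0)) :
    ∃ A : Set Λ.Edge, A ⊆ Λ.outerEdgeBdry ω (Λ.clusterSet ω x0) ∧
      (Λ.outerEdgeBdry ω (Λ.clusterSet ω x0)).ncard ≤ 2 * A.ncard ∧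
      ∃ S : Set Λ.Edge, Λ.isConfigCut ω S ∧ Disjoint S A :=
  half_outer_boundary_avoids_cut_general d Λ ω hω x0 hint

end IsingInterface
end
end

section
/- Almost surely under the coupling π_{Λ,β}, every pivotal edge of the configuration ω' for the event {T ⇸ B} belongs to P_I; that is, for a pivotal edge ⟨x,y⟩ with x in the open cluster of T and y in the open cluster of B in ω', one has σ^D(x) = +1 with x joined to T by a path of +1 spins in σ^D, σ^D(y) = −1 with y joined to B by a path of −1 spins in σ^D, and moreover σ^+(x) = σ^+(y) = +1 and σ^−(x) = σ^−(y) = −1, so that P ⊆ P_I and P ⊆ I_I. -/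
open scoped BigOperators
open scoped Classical

noncomputable section

/-!
Opening a pivotal edge of `ω'` joins `T` to `B`, so one endpoint lies in the `ω'`-cluster of
`T` and the other in that of `B`. The Dobrushin colouring gives these clusters the spins `+1`
and `-1`, and the open paths to `T` and `B` are paths of constant spin. Since `ω ≥ ω'`, both
clusters touch `∂Λ` in `ω`, where `σ^+ = +1` and `σ^- = -1`.
-/

namespace IsingInterface

namespace Box

variable {d : ℕ} (Λ : Box d)

lemma mk_mem_Efinset_iff {x y : Fin d → ℤ} :
    s(x, y) ∈ Λ.Efinset ↔ latticeAdj d x y ∧ x ∈ Λ.Vfinset ∧ y ∈ Λ.Vfinset := by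
  simp only [Efinset, Vfinset, Set.Finite.mem_toFinset]
  constructor
  · rintro ⟨u, v, huv, hadj, hu, hv⟩
    rcases Sym2.eq_iff.1 huv with ⟨rfl, rfl⟩ | ⟨rfl, rfl⟩
    · exact ⟨hadj, hu, hv⟩
    · exact ⟨latticeAdj_symm hadj, hv, hu⟩
  · rintro ⟨hadj, hx, hy⟩
    exact ⟨x, y, rfl, hadj, hx, hy⟩

variable {Λ}

lemma openAdj_symm {ω : Λ.Config} {x y : Fin d → ℤ} (h : Λ.openAdj ω x y) :
    Λ.openAdj ω y x := by
  unfold openAdj at h ⊢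
  rwa [Sym2.eq_swap]

lemma conn_symm {ω : Λ.Config} {x y : Fin d → ℤ} (h : Λ.Conn ω x y) : Λ.Conn ω y x :=
  Relation.ReflTransGen.mono (fun _ _ => openAdj_symm) _ _ (Relation.ReflTransGen.swap _ _ h)

lemma conn_mono {ω ω' : Λ.Config} (hle : ∀ e, ω' e = true → ω e = true)
    {x y : Fin d → ℤ} (h : Λ.Conn ω' x y) : Λ.Conn ω x y :=
  Relation.ReflTransGen.mono (fun _ _ ⟨hxy, hopen⟩ => ⟨hxy, hle _ hopen⟩) _ _ h

lemma connTo_mono {ω ω' : Λ.Config} (hle : ∀ e, ω' e = true → ω e = true)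
    {S S' : Set (Fin d → ℤ)} (hS : S ⊆ S') {x : Fin d → ℤ} (h : Λ.connTo ω' S x) :
    Λ.connTo ω S' x :=
  let ⟨t, ht, hconn⟩ := h
  ⟨t, hS ht, conn_mono hle hconn⟩

lemma conn_upd_true_cases {ω : Λ.Config} {e : Λ.Edge} {a b : Fin d → ℤ} (hab : e.1 = s(a, b))
    {u v : Fin d → ℤ} (h : Λ.Conn (Λ.upd ω e true) u v) :
    Λ.Conn ω u v ∨ (Λ.Conn ω u a ∧ Λ.Conn ω b v) ∨ (Λ.Conn ω u b ∧ Λ.Conn ω a v) := by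
  induction h with
  | refl => exact Or.inl .refl
  | @tail w z _ hstep ih =>
    obtain ⟨hwz, hopen⟩ := hstep
    by_cases hcross : (⟨s(w, z), hwz⟩ : Λ.Edge) = e
    · have hwz_ab : s(w, z) = s(a, b) := by rw [← hab, ← hcross]
      rcases Sym2.eq_iff.1 hwz_ab with ⟨rfl, rfl⟩ | ⟨rfl, rfl⟩
      · rcases ih with h | ⟨h, _⟩ | ⟨h, _⟩
        · exact Or.inr (Or.inl ⟨h, .refl⟩)
        · exact Or.inr (Or.inl ⟨h, .refl⟩)
        · exact Or.inl h
      · rcases ih with h | ⟨h, _⟩ | ⟨h, _⟩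
        · exact Or.inr (Or.inr ⟨h, .refl⟩)
        · exact Or.inl h
        · exact Or.inr (Or.inr ⟨h, .refl⟩)
    · rw [upd, Function.update_of_ne hcross] at hopen
      have hstep : Λ.openAdj ω w z := ⟨hwz, hopen⟩
      rcases ih with h | ⟨h₁, h₂⟩ | ⟨h₁, h₂⟩
      · exact Or.inl (h.tail hstep)
      · exact Or.inr (Or.inl ⟨h₁, h₂.tail hstep⟩)
      · exact Or.inr (Or.inr ⟨h₁, h₂.tail hstep⟩)

lemma exists_connTo_of_pivotal {ω : Λ.Config} {e : Λ.Edge} (hpiv : Λ.pivotal ω e) :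
    ∃ a b, e.1 = s(a, b) ∧ Λ.connTo ω Λ.Tside a ∧ Λ.connTo ω Λ.Bside b := by
  obtain ⟨hdisc, t, ht, b, hb, hconn⟩ := hpiv
  obtain ⟨x, y, hxy, -⟩ := (Set.Finite.mem_toFinset _).1 e.2
  rcases conn_upd_true_cases hxy hconn with h | ⟨h₁, h₂⟩ | ⟨h₁, h₂⟩
  · exact absurd ⟨t, ht, b, hb, h⟩ hdisc
  · exact ⟨x, y, hxy, ⟨t, ht, h₁⟩, ⟨b, hb, conn_symm h₂⟩⟩
  · exact ⟨y, x, hxy.trans Sym2.eq_swap, ⟨t, ht, h₁⟩, ⟨b, hb, conn_symm h₂⟩⟩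

lemma signConnTo_of_connTo {ω : Λ.Config} {σ : Λ.SpinCfg} {b : Bool} {S : Set (Fin d → ℤ)}
    (hcol : ∀ x (hx : x ∈ Λ.Vfinset), Λ.connTo ω S x → σ ⟨x, hx⟩ = b)
    {x : Fin d → ℤ} (h : Λ.connTo ω S x) : Λ.signConnTo σ b x S := by
  obtain ⟨t, ht, hconn⟩ := h
  refine ⟨t, ht, ?_⟩
  induction hconn with
  | refl => exact .refl
  | @tail w z hpath hstep ih =>
    obtain ⟨hadj, hw, hz⟩ := Λ.mk_mem_Efinset_iff.1 hstep.1
    exact .head ⟨latticeAdj_symm hadj, hz, hw, hcol z hz ⟨t, ht, hpath.tail hstep⟩,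
      hcol w hw ⟨t, ht, hpath⟩⟩ ih

lemma valid_of_colorProb_ne_zero {ω ω' : Λ.Config} {tr : Λ.SpinCfg × Λ.SpinCfg × Λ.SpinCfg}
    (h : Λ.colorProb ω ω' tr ≠ 0) :
    Λ.validD ω' tr.2.2 ∧ Λ.validPM ω ω' tr.2.2 tr.1 tr.2.1 := by
  by_contra hvalid
  exact h (by rw [colorProb, if_neg hvalid, zero_mul])

lemma spins_of_connTo_side {ω ω' : Λ.Config} {σD σP σM : Λ.SpinCfg} {S : Set (Fin d → ℤ)}
    {b : Bool} (hS : S ⊆ Λ.bdry) (hle : ∀ e, ω' e = true → ω e = true)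
    (hcol : ∀ x (hx : x ∈ Λ.Vfinset), Λ.connTo ω' S x → σD ⟨x, hx⟩ = b)
    (hPM : Λ.validPM ω ω' σD σP σM) (x : Fin d → ℤ) (hx : x ∈ Λ.Vfinset)
    (h : Λ.connTo ω' S x) :
    σD ⟨x, hx⟩ = b ∧ Λ.signConnTo σD b x S ∧ σP ⟨x, hx⟩ = true ∧ σM ⟨x, hx⟩ = false :=
  ⟨hcol x hx h, signConnTo_of_connTo hcol h, hPM.2.1 x hx (connTo_mono hle hS h)⟩

end Box

theorem pivotal_edges_in_PI_general
    (d : ℕ) (Λ : Box d) (β : ℝ)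
    (μ : Λ.Config × Λ.Config → ℝ) (hμ : Λ.IsCoupling (1 - Real.exp (-β)) 2 μ)
    (st : Λ.Config × Λ.Config) (tr : Λ.SpinCfg × Λ.SpinCfg × Λ.SpinCfg)
    (hst : μ st ≠ 0) (htr : Λ.colorProb st.1 st.2 tr ≠ 0) :
    (∀ e : Λ.Edge, Λ.pivotal st.2 e →
      e ∈ Λ.PIset tr.2.2 ∧ e ∈ Λ.IIset tr.1 tr.2.1 tr.2.2) ∧
    (∀ e : Λ.Edge, Λ.pivotal st.2 e →
      ∀ x y, ∀ hx : x ∈ Λ.Vfinset, ∀ hy : y ∈ Λ.Vfinset, e.1 = s(x, y) →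
        Λ.connTo st.2 Λ.Tside x → Λ.connTo st.2 Λ.Bside y →
          tr.2.2 ⟨x, hx⟩ = true ∧ Λ.signConnTo tr.2.2 true x Λ.Tside ∧
          tr.2.2 ⟨y, hy⟩ = false ∧ Λ.signConnTo tr.2.2 false y Λ.Bside ∧
          tr.1 ⟨x, hx⟩ = true ∧ tr.1 ⟨y, hy⟩ = true ∧
          tr.2.1 ⟨x, hx⟩ = false ∧ tr.2.1 ⟨y, hy⟩ = false) := by
  obtain ⟨-, -, hsupp, -⟩ := hμ
  obtain ⟨-, hle⟩ := hsupp st hst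
  obtain ⟨hD, hPM⟩ := Box.valid_of_colorProb_ne_zero htr
  have hT := Box.spins_of_connTo_side (fun _ h => h.1) hle hD.2.1 hPM
  have hB := Box.spins_of_connTo_side (fun _ h => h.1) hle hD.2.2 hPM
  refine ⟨fun e hpiv => ?_, fun e _ x y hx hy _ hTx hBy => ?_⟩
  · obtain ⟨a, b, hab, hTa, hBb⟩ := Box.exists_connTo_of_pivotal hpiv
    obtain ⟨-, ha, hb⟩ := Λ.mk_mem_Efinset_iff.1 (hab ▸ e.2)
    obtain ⟨hDa, hsa, hPa, hMa⟩ := hT a ha hTa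
    obtain ⟨hDb, hsb, hPb, hMb⟩ := hB b hb hBb
    refine ⟨⟨a, b, ha, hb, hab, hDa, hsa, hDb, hsb⟩, ⟨a, b, ha, hb, hab, ?_, ?_, ?_⟩⟩
    · rw [hPa, hPb]
    · rw [hMa, hMb]
    · simp [hDa, hDb]
  · obtain ⟨hDx, hsx, hPx, hMx⟩ := hT x hx hTx
    obtain ⟨hDy, hsy, hPy, hMy⟩ := hB y hy hBy
    exact ⟨hDx, hsx, hDy, hsy, hPx, hPy, hMx, hMy⟩

/-- **Lemma (pivotal edges belong to `𝒫_I` and `ℐ_I`).**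
Almost surely under the coupling `π_{Λ,β}` (i.e. for every pair of configurations and
every spin triple of positive probability), every pivotal edge of `ω'` for `{T ⇸ B}`
belongs to `𝒫_I` and to `ℐ_I`; moreover for such an edge `⟨x,y⟩` with `x` in the open
cluster of `T` and `y` in the open cluster of `B` in `ω'`, one has `σ^D(x) = +1` with a
`+` path from `x` to `T`, `σ^D(y) = -1` with a `-` path from `y` to `B`,
`σ^+(x) = σ^+(y) = +1` and `σ^-(x) = σ^-(y) = -1`. -/
theorem pivotal_edges_in_PI
    (d : ℕ) (hd : 2 ≤ d) (Λ : Box d) (β : ℝ) (hβ : 0 < β)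
    (μ : Λ.Config × Λ.Config → ℝ) (hμ : Λ.IsCoupling (1 - Real.exp (-β)) 2 μ)
    (st : Λ.Config × Λ.Config) (tr : Λ.SpinCfg × Λ.SpinCfg × Λ.SpinCfg)
    (hst : μ st ≠ 0) (htr : Λ.colorProb st.1 st.2 tr ≠ 0) :
    (∀ e : Λ.Edge, Λ.pivotal st.2 e →
      e ∈ Λ.PIset tr.2.2 ∧ e ∈ Λ.IIset tr.1 tr.2.1 tr.2.2) ∧
    (∀ e : Λ.Edge, Λ.pivotal st.2 e →
      ∀ x y, ∀ hx : x ∈ Λ.Vfinset, ∀ hy : y ∈ Λ.Vfinset, e.1 = s(x, y) →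
        Λ.connTo st.2 Λ.Tside x → Λ.connTo st.2 Λ.Bside y →
          tr.2.2 ⟨x, hx⟩ = true ∧ Λ.signConnTo tr.2.2 true x Λ.Tside ∧
          tr.2.2 ⟨y, hy⟩ = false ∧ Λ.signConnTo tr.2.2 false y Λ.Bside ∧
          tr.1 ⟨x, hx⟩ = true ∧ tr.1 ⟨y, hy⟩ = true ∧
          tr.2.1 ⟨x, hx⟩ = false ∧ tr.2.1 ⟨y, hy⟩ = false) :=
  pivotal_edges_in_PI_general d Λ β μ hμ st tr hst htr

end IsingInterface
end
end
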